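/- Fix integers n, m ≥ 1 with n odd. Then: (a) for every n-element subset F ⊆ {1,…,n+m}, there is a unique S ∈ X such that the vertex A(F) is one of the two vertices of D(S); and (b) for every n-element subset F ⊆ {1,…,n+m} with F ≠ {m,…,m+n−1} and F ≠ {m+1,…,m+n}, there is a unique S ∈ X such that the vertex B(F) is one of the two vertices of D(S). -/
import Mathlib


noncomputable section
attribute [local instance] Classical.propDecidable

/-- The four symbols `A`, `B`, `C`, `D` labelling the vertices of the colored graph
`Λ(n,m)`: a vertex of `Λ(n,m)` is a pair `(X, S)` (written `X(S)` in the paper) of a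
symbol `X ∈ {A,B,C,D}` and an `n`-element subset `S ⊆ {1,…,n+m}`. -/
inductive Lbl | A | B | C | D
deriving DecidableEq

/-- `S ∈ X_j`, i.e. `S ⊆ {j+1,…,n+m}` and `#S = n+1-j`, for `1 ≤ j ≤ n`. -/
def inXj (n m j : ℕ) (S : Finset ℕ) : Prop :=
  1 ≤ j ∧ j ≤ n ∧ S ⊆ Finset.Icc (j+1) (n+m) ∧ S.card = n + 1 - j

/-- `S ∈ X = X_1 ∪ ⋯ ∪ X_n`. -/
def inX (n m : ℕ) (S : Finset ℕ) : Prop := ∃ j, inXj n m j S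

/-- For `S = {i_1 < ⋯ < i_{n+1-j}} ∈ X_j` (where `j = n+1-#S`) and `S' = S \ {i_1}`,
the pair `D(S) = D_j(S)` of vertices of `Λ(n,m)`:
`{A([j-1] ∪ S), A([j] ∪ S')}` if `j` is odd and `i_1 = j+1`;
`{A([j-1] ∪ S), B([i_1-j-1, i_1-2] ∪ S')}` if `j` is odd and `i_1 > j+1`;
`{B([i_1-j, i_1-2] ∪ S), B([i_1-j, i_1-1] ∪ S')}` if `j` is even. -/
def DS (n m : ℕ) (S : Finset ℕ) : (Lbl × Finset ℕ) × (Lbl × Finset ℕ) :=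
  let j := n + 1 - S.card
  let i1 := if h : S.Nonempty then S.min' h else 0
  let S' := S.erase i1
  if Odd j then
    if i1 = j + 1 then
      ((Lbl.A, Finset.Icc 1 (j-1) ∪ S), (Lbl.A, Finset.Icc 1 j ∪ S'))
    else
      ((Lbl.A, Finset.Icc 1 (j-1) ∪ S), (Lbl.B, Finset.Icc (i1-j-1) (i1-2) ∪ S'))
  else
    ((Lbl.B, Finset.Icc (i1-j) (i1-2) ∪ S), (Lbl.B, Finset.Icc (i1-j) (i1-1) ∪ S'))

open Finset

lemma DS_fst_odd (n m : ℕ) (S : Finset ℕ) (hS : S.Nonempty) (hj : Odd (n + 1 - S.card)) :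
    (DS n m S).1 = (Lbl.A, Finset.Icc 1 (n + 1 - S.card - 1) ∪ S) := by
  simp only [DS, dif_pos hS, if_pos hj]
  split <;> rfl

lemma DS_snd_odd_min (n m : ℕ) (S : Finset ℕ) (hS : S.Nonempty) (hj : Odd (n + 1 - S.card))
    (hmin : S.min' hS = n + 1 - S.card + 1) :
    (DS n m S).2 = (Lbl.A, Finset.Icc 1 (n + 1 - S.card) ∪ S.erase (S.min' hS)) := by
  simp only [DS, dif_pos hS, if_pos hj, if_pos hmin]

lemma DS_snd_odd_nmin (n m : ℕ) (S : Finset ℕ) (hS : S.Nonempty) (hj : Odd (n + 1 - S.card))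
    (hmin : S.min' hS ≠ n + 1 - S.card + 1) :
    (DS n m S).2 = (Lbl.B, Finset.Icc (S.min' hS - (n + 1 - S.card) - 1) (S.min' hS - 2)
      ∪ S.erase (S.min' hS)) := by
  simp only [DS, dif_pos hS, if_pos hj, if_neg hmin]

lemma DS_even (n m : ℕ) (S : Finset ℕ) (hS : S.Nonempty) (hj : ¬ Odd (n + 1 - S.card)) :
    DS n m S = ((Lbl.B, Finset.Icc (S.min' hS - (n + 1 - S.card)) (S.min' hS - 2) ∪ S),
      (Lbl.B, Finset.Icc (S.min' hS - (n + 1 - S.card)) (S.min' hS - 1) ∪ S.erase (S.min' hS))) := by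
  simp only [DS, dif_pos hS, if_neg hj]

private theorem partA (n m : ℕ) (hn : 1 ≤ n) (hm : 1 ≤ m) (hodd : Odd n) :
    (∀ F : Finset ℕ, F ⊆ Finset.Icc 1 (n+m) → F.card = n →
      ∃! S : Finset ℕ, inX n m S ∧
        ((Lbl.A, F) = (DS n m S).1 ∨ (Lbl.A, F) = (DS n m S).2)) := by
  intro F hF hcard
  have hex : ∃ t, t + 1 ∉ F := by
    refine ⟨n + m, fun hc => ?_⟩
    have := hF hc; rw [Finset.mem_Icc] at this; omega
  set t := Nat.find hex with htdef
  have h2 : t + 1 ∉ F := Nat.find_spec hex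
  have h1 : Finset.Icc 1 t ⊆ F := by
    intro x hx
    rw [Finset.mem_Icc] at hx
    by_contra hxF
    exact Nat.find_min hex (show x - 1 < t by omega) (by rwa [Nat.sub_add_cancel hx.1])
  have tuniq : ∀ u, Finset.Icc 1 u ⊆ F → (u+1) ∉ F → u = t := by
    intro u hu1 hu2
    have hle : t ≤ u := Nat.find_min' hex hu2
    rcases eq_or_lt_of_le hle with h | h
    · omega
    · exact absurd (hu1 (by rw [Finset.mem_Icc]; omega)) h2
  have hTmem : ∀ x ∈ F \ Finset.Icc 1 t, t + 2 ≤ x ∧ x ≤ n + m := by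
    intro x hx
    rw [Finset.mem_sdiff, Finset.mem_Icc] at hx
    have hx1 := hF hx.1; rw [Finset.mem_Icc] at hx1
    have : x ≠ t + 1 := fun h => h2 (h ▸ hx.1)
    omega
  have htn : t ≤ n := by
    have := Finset.card_le_card h1
    rw [Nat.card_Icc, hcard] at this; omega
  have hcardT : (F \ Finset.Icc 1 t).card = n - t := by
    rw [Finset.card_sdiff_of_subset h1, Nat.card_Icc, hcard]; omega
  have hFeq : Finset.Icc 1 t ∪ (F \ Finset.Icc 1 t) = F := Finset.union_sdiff_of_subset h1
  set S₀ := if Even t then F \ Finset.Icc 1 t else insert (t+1) (F \ Finset.Icc 1 t) with hS₀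
  refine ⟨S₀, ⟨?_, ?_⟩, ?_⟩
  · -- inX n m S₀
    by_cases hpar : Even t
    · have htlt : t < n := by
        rcases hodd with ⟨k, hk⟩; rcases hpar with ⟨l, hl⟩; omega
      rw [hS₀, if_pos hpar]
      refine ⟨t+1, by omega, by omega, ?_, by omega⟩
      intro x hx; rw [Finset.mem_Icc]; have := hTmem x hx; omega
    · have ht1 : 1 ≤ t := by
        rcases Nat.eq_zero_or_pos t with h | h
        · exact absurd (h ▸ (Even.zero)) hpar
        · exact h
      rw [hS₀, if_neg hpar]
      refine ⟨t, ht1, htn, ?_, ?_⟩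
      · intro x hx
        rw [Finset.mem_insert] at hx
        rw [Finset.mem_Icc]
        rcases hx with h | h
        · omega
        · have := hTmem x h; omega
      · rw [Finset.card_insert_of_notMem (fun h => by have := hTmem _ h; omega), hcardT]
        omega
  · -- the A-condition
    by_cases hpar : Even t
    · left
      have htlt : t < n := by
        rcases hodd with ⟨k, hk⟩; rcases hpar with ⟨l, hl⟩; omega
      have hne : S₀.Nonempty := by
        rw [← Finset.card_pos, hS₀, if_pos hpar, hcardT]; omega
      have hjval : n + 1 - S₀.card = t + 1 := by
        rw [hS₀, if_pos hpar, hcardT]; omega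
      rw [DS_fst_odd n m S₀ hne (by rw [hjval]; exact Even.add_one hpar), hjval,
        Nat.add_sub_cancel]
      rw [hS₀, if_pos hpar, hFeq]
    · right
      have ht1 : 1 ≤ t := by
        rcases Nat.eq_zero_or_pos t with h | h
        · exact absurd (h ▸ (Even.zero)) hpar
        · exact h
      have hnotmem : t + 1 ∉ F \ Finset.Icc 1 t := fun h => by have := hTmem _ h; omega
      have hne : S₀.Nonempty := by
        rw [hS₀, if_neg hpar]; exact Finset.insert_nonempty _ _
      have hcardS : S₀.card = n + 1 - t := by
        rw [hS₀, if_neg hpar, Finset.card_insert_of_notMem hnotmem, hcardT]; omega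
      have hjval : n + 1 - S₀.card = t := by rw [hcardS]; omega
      have hmin : S₀.min' hne = t + 1 := by
        apply le_antisymm
        · apply Finset.min'_le
          rw [hS₀, if_neg hpar]; exact Finset.mem_insert_self _ _
        · apply Finset.le_min'
          intro y hy
          rw [hS₀, if_neg hpar, Finset.mem_insert] at hy
          rcases hy with h | h
          · omega
          · have := hTmem _ h; omega
      have hoddj : Odd (n + 1 - S₀.card) := by
        rw [hjval]; rwa [← Nat.not_even_iff_odd]
      rw [DS_snd_odd_min n m S₀ hne hoddj (by rw [hmin, hjval]), hjval, hmin]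
      rw [hS₀, if_neg hpar, Finset.erase_insert hnotmem, hFeq]
  · -- uniqueness
    rintro S ⟨⟨j, hj1, hj2, hj3, hj4⟩, hor⟩
    have hSne : S.Nonempty := by rw [← Finset.card_pos, hj4]; omega
    have hjval : n + 1 - S.card = j := by omega
    have hmin_ge : j + 1 ≤ S.min' hSne := by
      have := hj3 (S.min'_mem hSne); rw [Finset.mem_Icc] at this; exact this.1
    have hSmem : ∀ x ∈ S, j + 1 ≤ x ∧ x ≤ n + m := by
      intro x hx; have := hj3 hx; rw [Finset.mem_Icc] at this; exact this
    by_cases hjodd : Odd j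
    · rcases hor with h | h
      · rw [DS_fst_odd n m S hSne (by rwa [hjval]), hjval] at h
        have hFeq2 : F = Finset.Icc 1 (j-1) ∪ S := congrArg Prod.snd h
        have hsub : Finset.Icc 1 (j-1) ⊆ F := by
          rw [hFeq2]; exact Finset.subset_union_left
        have hnotin : (j-1) + 1 ∉ F := by
          rw [hFeq2]
          intro hx
          rcases Finset.mem_union.mp hx with hx | hx
          · rw [Finset.mem_Icc] at hx; omega
          · have := hSmem _ hx; omega
        have ht : j - 1 = t := tuniq _ hsub hnotin
        have hpar : Even t := by
          rcases hjodd with ⟨k, hk⟩; exact ⟨k, by omega⟩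
        have hdisj : Disjoint (Finset.Icc 1 (j-1)) S := by
          rw [Finset.disjoint_left]
          intro x hx hxS
          rw [Finset.mem_Icc] at hx; have := hSmem _ hxS; omega
        rw [hS₀, if_pos hpar, ← ht, hFeq2, Finset.union_sdiff_cancel_left hdisj]
      · by_cases hmi : S.min' hSne = j + 1
        · rw [DS_snd_odd_min n m S hSne (by rwa [hjval]) (by rw [hmi, hjval]), hjval] at h
          have hFeq2 : F = Finset.Icc 1 j ∪ S.erase (S.min' hSne) := congrArg Prod.snd h
          have hermem : ∀ x ∈ S.erase (S.min' hSne), j + 2 ≤ x ∧ x ≤ n + m := by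
            intro x hx
            rw [Finset.mem_erase] at hx
            have := hSmem _ hx.2
            have hge := Finset.min'_le S x hx.2
            rw [hmi] at hge
            have := hx.1; rw [hmi] at this
            omega
          have hsub : Finset.Icc 1 j ⊆ F := by rw [hFeq2]; exact Finset.subset_union_left
          have hnotin : j + 1 ∉ F := by
            rw [hFeq2]
            intro hx
            rcases Finset.mem_union.mp hx with hx | hx
            · rw [Finset.mem_Icc] at hx; omega
            · have := hermem _ hx; omega
          have ht : j = t := tuniq _ hsub hnotin
          have hpar : ¬ Even t := by
            rw [← ht]; exact Nat.not_even_iff_odd.mpr hjodd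
          have hdisj : Disjoint (Finset.Icc 1 j) (S.erase (S.min' hSne)) := by
            rw [Finset.disjoint_left]
            intro x hx hxS
            rw [Finset.mem_Icc] at hx; have := hermem _ hxS; omega
          have hminS : S.min' hSne ∈ S := S.min'_mem hSne
          rw [hS₀, if_neg hpar, ← ht, hFeq2, Finset.union_sdiff_cancel_left hdisj,
            ← hmi, Finset.insert_erase hminS]
        · rw [DS_snd_odd_nmin n m S hSne (by rwa [hjval]) (by rwa [hjval])] at h
          exact absurd (congrArg Prod.fst h) (by simp)
    · have heven := DS_even n m S hSne (by rwa [hjval])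
      rcases hor with h | h <;> rw [heven] at h <;>
        exact absurd (congrArg Prod.fst h) (by simp)

private theorem partB (n m : ℕ) (hn : 1 ≤ n) (hm : 1 ≤ m) (hodd : Odd n) :
    (∀ F : Finset ℕ, F ⊆ Finset.Icc 1 (n+m) → F.card = n →
      F ≠ Finset.Icc m (m+n-1) → F ≠ Finset.Icc (m+1) (m+n) →
      ∃! S : Finset ℕ, inX n m S ∧
        ((Lbl.B, F) = (DS n m S).1 ∨ (Lbl.B, F) = (DS n m S).2)) := by
  intro F hF hcard hne1 hne2
  have hFne : F.Nonempty := by rw [← Finset.card_pos, hcard]; omega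
  set a := F.min' hFne with hadef
  have hFmem : ∀ x ∈ F, 1 ≤ x ∧ x ≤ n + m := by
    intro x hx; have := hF hx; rwa [Finset.mem_Icc] at this
  have ha1 : 1 ≤ a ∧ a ≤ n + m := hFmem _ (F.min'_mem hFne)
  have hamin : ∀ x ∈ F, a ≤ x := fun x hx => F.min'_le x hx
  have hex : ∃ r, a + r ∉ F := by
    refine ⟨n + m, fun hc => ?_⟩
    have := hFmem _ hc; omega
  set r := Nat.find hex with hrdef
  have hstop : a + r ∉ F := Nat.find_spec hex
  have hr1 : 0 < r := by
    rcases Nat.eq_zero_or_pos r with h | h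
    · exfalso
      have := hstop; rw [h, Nat.add_zero] at this
      exact this (F.min'_mem hFne)
    · exact h
  have hrun : Finset.Icc a (a + r - 1) ⊆ F := by
    intro x hx
    rw [Finset.mem_Icc] at hx
    by_contra hxF
    exact Nat.find_min hex (show x - a < r by omega) (by
      have : a + (x - a) = x := by omega
      rwa [this])
  have runiq : ∀ u, 0 < u → Finset.Icc a (a + u - 1) ⊆ F → a + u ∉ F → u = r := by
    intro u hu hu1 hu2
    have hle : r ≤ u := Nat.find_min' hex hu2
    rcases eq_or_lt_of_le hle with h | h
    · omega
    · exact absurd (hu1 (by rw [Finset.mem_Icc]; omega)) hstop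
  have hTmem : ∀ x ∈ F \ Finset.Icc a (a + r - 1), a + r + 1 ≤ x ∧ x ≤ n + m := by
    intro x hx
    rw [Finset.mem_sdiff, Finset.mem_Icc] at hx
    have hx1 := hFmem _ hx.1
    have hxa := hamin _ hx.1
    have : x ≠ a + r := fun h => hstop (h ▸ hx.1)
    omega
  have hrn : r ≤ n := by
    have := Finset.card_le_card hrun
    rw [Nat.card_Icc, hcard] at this; omega
  have hcardT : (F \ Finset.Icc a (a + r - 1)).card = n - r := by
    rw [Finset.card_sdiff_of_subset hrun, Nat.card_Icc, hcard]; omega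
  have hFeq : Finset.Icc a (a + r - 1) ∪ (F \ Finset.Icc a (a + r - 1)) = F :=
    Finset.union_sdiff_of_subset hrun
  set T := F \ Finset.Icc a (a + r - 1) with hTdef
  -- if T is empty then F is an interval of length n starting at a, with a ≤ m - 1
  have hTempty : T = ∅ → r = n ∧ a + 1 ≤ m := by
    intro hT
    have hrn' : r = n := by
      have := hcardT; rw [hT] at this; simp at this; omega
    have hFI : F = Finset.Icc a (a + r - 1) := by
      rw [← hFeq, hT, Finset.union_empty]
    constructor
    · exact hrn'
    · have hub : a + n - 1 ≤ n + m := by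
        have : a + r - 1 ∈ F := by
          rw [hFI]; rw [Finset.mem_Icc]; omega
        have := hFmem _ this; omega
      by_contra hcon
      push_neg at hcon
      have ham : a = m ∨ a = m + 1 := by omega
      rcases ham with h | h
      · exact hne1 (by rw [hFI, hrn']; congr 1 <;> omega)
      · exact hne2 (by rw [hFI, hrn']; congr 1 <;> omega)
  set S₀ := if Even r then insert (a + r) T
    else if a + r + 1 ∈ F then T else insert (a + r + 1) T with hS₀
  refine ⟨S₀, ⟨?_, ?_⟩, ?_⟩
  · -- inX n m S₀
    by_cases hpar : Even r
    · -- branch 1 : j = r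
      have hTne : T.Nonempty := by
        rw [Finset.nonempty_iff_ne_empty]
        intro h
        rcases hTempty h with ⟨h1, _⟩
        rcases hodd with ⟨k, hk⟩; rcases hpar with ⟨l, hl⟩; omega
      obtain ⟨x0, hx0⟩ := hTne
      have hx0b := hTmem _ hx0
      rw [hS₀, if_pos hpar]
      refine ⟨r, by omega, hrn, ?_, ?_⟩
      · intro x hx
        rw [Finset.mem_insert] at hx
        rw [Finset.mem_Icc]
        rcases hx with h | h
        · omega
        · have := hTmem x h; omega
      · rw [Finset.card_insert_of_notMem (fun h => by have := hTmem _ h; omega), hcardT]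
        omega
    · by_cases hbf : a + r + 1 ∈ F
      · -- branch 2 : j = r + 1, S₀ = T
        have hbT : a + r + 1 ∈ T := by
          rw [hTdef, Finset.mem_sdiff, Finset.mem_Icc]
          exact ⟨hbf, by omega⟩
        have hTne : T.Nonempty := ⟨_, hbT⟩
        have hrn' : r < n := by
          have : 0 < T.card := Finset.card_pos.mpr hTne
          omega
        rw [hS₀, if_neg hpar, if_pos hbf]
        refine ⟨r + 1, by omega, by omega, ?_, by omega⟩
        intro x hx
        rw [Finset.mem_Icc]
        have := hTmem x hx; omega
      · -- branch 3 : j = r, S₀ = insert (a+r+1) T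
        have hub : a + r + 1 ≤ n + m := by
          rcases Finset.eq_empty_or_nonempty T with h | ⟨x0, hx0⟩
          · rcases hTempty h with ⟨h1, h2⟩; omega
          · have := hTmem _ hx0
            have hx0ne : x0 ≠ a + r + 1 := by
              intro h; rw [hTdef, Finset.mem_sdiff] at hx0; exact hbf (h ▸ hx0.1)
            omega
        rw [hS₀, if_neg hpar, if_neg hbf]
        refine ⟨r, by omega, hrn, ?_, ?_⟩
        · intro x hx
          rw [Finset.mem_insert] at hx
          rw [Finset.mem_Icc]
          rcases hx with h | h
          · omega
          · have := hTmem x h; omega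
        · rw [Finset.card_insert_of_notMem (fun h => by
            rw [hTdef, Finset.mem_sdiff] at h; exact hbf h.1), hcardT]
          omega
  · -- the B-condition
    by_cases hpar : Even r
    · -- branch 1: second component, j = r even
      right
      have hnotmem : a + r ∉ T := fun h => by have := hTmem _ h; omega
      have hne : S₀.Nonempty := by
        rw [hS₀, if_pos hpar]; exact Finset.insert_nonempty _ _
      have hcardS : S₀.card = n + 1 - r := by
        rw [hS₀, if_pos hpar, Finset.card_insert_of_notMem hnotmem, hcardT]; omega
      have hjval : n + 1 - S₀.card = r := by rw [hcardS]; omega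
      have hmin : S₀.min' hne = a + r := by
        apply le_antisymm
        · apply Finset.min'_le; rw [hS₀, if_pos hpar]; exact Finset.mem_insert_self _ _
        · apply Finset.le_min'
          intro y hy
          rw [hS₀, if_pos hpar, Finset.mem_insert] at hy
          rcases hy with h | h
          · omega
          · have := hTmem _ h; omega
      have hnotodd : ¬ Odd (n + 1 - S₀.card) := by
        rw [hjval]; exact (Nat.not_odd_iff_even).mpr hpar
      rw [DS_even n m S₀ hne hnotodd, hmin, hjval]
      have e1 : a + r - r = a := by omega
      rw [e1]
      rw [hS₀, if_pos hpar, Finset.erase_insert hnotmem, hFeq]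
    · by_cases hbf : a + r + 1 ∈ F
      · -- branch 2: first component, j = r+1 even
        left
        have hbT : a + r + 1 ∈ T := by
          rw [hTdef, Finset.mem_sdiff, Finset.mem_Icc]
          exact ⟨hbf, by omega⟩
        have hne : S₀.Nonempty := by rw [hS₀, if_neg hpar, if_pos hbf]; exact ⟨_, hbT⟩
        have hTne : T.Nonempty := ⟨_, hbT⟩
        have hrn' : r < n := by
          have : 0 < T.card := Finset.card_pos.mpr hTne
          omega
        have hcardS : S₀.card = n - r := by rw [hS₀, if_neg hpar, if_pos hbf, hcardT]
        have hjval : n + 1 - S₀.card = r + 1 := by rw [hcardS]; omega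
        have hmin : S₀.min' hne = a + r + 1 := by
          apply le_antisymm
          · apply Finset.min'_le; rw [hS₀, if_neg hpar, if_pos hbf]; exact hbT
          · apply Finset.le_min'
            intro y hy
            rw [hS₀, if_neg hpar, if_pos hbf] at hy
            have := hTmem _ hy; omega
        have hnotodd : ¬ Odd (n + 1 - S₀.card) := by
          rw [hjval]
          rw [Nat.not_odd_iff_even]
          rcases Nat.not_even_iff_odd.mp hpar with ⟨k, hk⟩
          exact ⟨k + 1, by omega⟩
        have h1 := congrArg Prod.fst (DS_even n m S₀ hne hnotodd)
        rw [h1, hmin, hjval]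
        have e1 : a + r + 1 - (r + 1) = a := by omega
        have e2 : a + r + 1 - 2 = a + r - 1 := by omega
        rw [e1, e2]
        rw [hS₀, if_neg hpar, if_pos hbf, hFeq]
      · -- branch 3: second component, j = r odd
        right
        have hub : a + r + 1 ≤ n + m := by
          rcases Finset.eq_empty_or_nonempty T with h | ⟨x0, hx0⟩
          · rcases hTempty h with ⟨h1, h2⟩; omega
          · have := hTmem _ hx0
            have hx0ne : x0 ≠ a + r + 1 := by
              intro h; rw [hTdef, Finset.mem_sdiff] at hx0; exact hbf (h ▸ hx0.1)
            omega
        have hnotmem : a + r + 1 ∉ T := fun h => by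
          rw [hTdef, Finset.mem_sdiff] at h; exact hbf h.1
        have hne : S₀.Nonempty := by
          rw [hS₀, if_neg hpar, if_neg hbf]; exact Finset.insert_nonempty _ _
        have hcardS : S₀.card = n + 1 - r := by
          rw [hS₀, if_neg hpar, if_neg hbf, Finset.card_insert_of_notMem hnotmem, hcardT]
          omega
        have hjval : n + 1 - S₀.card = r := by rw [hcardS]; omega
        have hmin : S₀.min' hne = a + r + 1 := by
          apply le_antisymm
          · apply Finset.min'_le; rw [hS₀, if_neg hpar, if_neg hbf]
            exact Finset.mem_insert_self _ _
          · apply Finset.le_min'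
            intro y hy
            rw [hS₀, if_neg hpar, if_neg hbf, Finset.mem_insert] at hy
            rcases hy with h | h
            · omega
            · have hh := hTmem _ h
              have : y ≠ a + r + 1 := fun hc => hnotmem (hc ▸ h)
              omega
        have hoddj : Odd (n + 1 - S₀.card) := by
          rw [hjval]; exact Nat.not_even_iff_odd.mp hpar
        have hmne : S₀.min' hne ≠ n + 1 - S₀.card + 1 := by rw [hmin, hjval]; omega
        rw [DS_snd_odd_nmin n m S₀ hne hoddj hmne, hmin, hjval]
        have e1 : a + r + 1 - r - 1 = a := by omega
        have e2 : a + r + 1 - 2 = a + r - 1 := by omega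
        rw [e1, e2]
        rw [hS₀, if_neg hpar, if_neg hbf, Finset.erase_insert hnotmem, hFeq]
  · -- uniqueness
    rintro S ⟨⟨j, hj1, hj2, hj3, hj4⟩, hor⟩
    have hSne : S.Nonempty := by rw [← Finset.card_pos, hj4]; omega
    have hjval : n + 1 - S.card = j := by omega
    set i := S.min' hSne with hidef
    have hmin_ge : j + 1 ≤ i ∧ i ≤ n + m := by
      have := hj3 (S.min'_mem hSne); rwa [Finset.mem_Icc] at this
    have hSmem : ∀ x ∈ S, j + 1 ≤ x ∧ x ≤ n + m := by
      intro x hx; have := hj3 hx; rwa [Finset.mem_Icc] at this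
    have hSmem2 : ∀ x ∈ S, i ≤ x := fun x hx => S.min'_le x hx
    have hermem : ∀ x ∈ S.erase i, i + 1 ≤ x ∧ x ≤ n + m := by
      intro x hx
      rw [Finset.mem_erase] at hx
      have h1 := hSmem _ hx.2
      have h2 := hSmem2 _ hx.2
      have := hx.1
      omega
    have hiS : i ∈ S := S.min'_mem hSne
    by_cases hjodd : Odd j
    · rcases hor with h | h
      · rw [DS_fst_odd n m S hSne (by rwa [hjval])] at h
        exact absurd (congrArg Prod.fst h) (by simp)
      · by_cases hmi : i = j + 1
        · rw [DS_snd_odd_min n m S hSne (by rwa [hjval]) (by rw [← hidef, hmi, hjval])] at h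
          exact absurd (congrArg Prod.fst h) (by simp)
        · rw [DS_snd_odd_nmin n m S hSne (by rwa [hjval])
            (by rw [← hidef, hjval]; exact hmi), hjval, ← hidef] at h
          have hFeq2 : F = Finset.Icc (i-j-1) (i-2) ∪ S.erase i := congrArg Prod.snd h
          have hij2 : j + 2 ≤ i := by omega
          -- min of F is i - j - 1
          have haval : a = i - j - 1 := by
            apply le_antisymm
            · apply Finset.min'_le
              rw [hFeq2, Finset.mem_union, Finset.mem_Icc]
              left; omega
            · apply Finset.le_min'
              intro y hy
              rw [hFeq2, Finset.mem_union, Finset.mem_Icc] at hy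
              rcases hy with hy | hy
              · omega
              · have := hermem _ hy; omega
          have hrval : j = r := by
            apply runiq j hj1
            · intro x hx
              rw [Finset.mem_Icc] at hx
              rw [hFeq2, Finset.mem_union, Finset.mem_Icc]
              left; omega
            · rw [hFeq2, Finset.mem_union, Finset.mem_Icc]
              push_neg
              refine ⟨fun _ => by omega, fun hc => ?_⟩
              have := hermem _ hc; omega
          have hpar : ¬ Even r := by
            rw [← hrval]; exact Nat.not_even_iff_odd.mpr hjodd
          have hbf : a + r + 1 ∉ F := by
            rw [hFeq2, Finset.mem_union, Finset.mem_Icc]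
            push_neg
            refine ⟨fun _ => by omega, fun hc => ?_⟩
            have := hermem _ hc; omega
          have hdisj : Disjoint (Finset.Icc (i-j-1) (i-2)) (S.erase i) := by
            rw [Finset.disjoint_left]
            intro x hx hxS
            rw [Finset.mem_Icc] at hx
            have := hermem _ hxS; omega
          have e1 : a + r + 1 = i := by omega
          have e2 : a + r - 1 = i - 2 := by omega
          rw [hS₀, if_neg hpar, if_neg hbf, hTdef, e1, e2, haval, hFeq2,
            Finset.union_sdiff_cancel_left hdisj, Finset.insert_erase hiS]
    · have hj2' : 2 ≤ j := by
        rcases Nat.not_odd_iff_even.mp hjodd with ⟨k, hk⟩; omega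
      have heven := DS_even n m S hSne (by rwa [hjval])
      rcases hor with h | h
      · have h' : (Lbl.B, F) = (Lbl.B, Finset.Icc (i-j) (i-2) ∪ S) := by
          rw [heven, hjval, ← hidef] at h; exact h
        have hFeq2 : F = Finset.Icc (i-j) (i-2) ∪ S := congrArg Prod.snd h'
        have haval : a = i - j := by
          apply le_antisymm
          · apply Finset.min'_le
            rw [hFeq2, Finset.mem_union, Finset.mem_Icc]
            left; omega
          · apply Finset.le_min'
            intro y hy
            rw [hFeq2, Finset.mem_union, Finset.mem_Icc] at hy
            rcases hy with hy | hy
            · omega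
            · have := hSmem _ hy; have := hSmem2 _ hy; omega
        have hrval : j - 1 = r := by
          apply runiq (j-1) (by omega)
          · intro x hx
            rw [Finset.mem_Icc] at hx
            rw [hFeq2, Finset.mem_union, Finset.mem_Icc]
            left; omega
          · rw [hFeq2, Finset.mem_union, Finset.mem_Icc]
            push_neg
            refine ⟨fun _ => by omega, fun hc => ?_⟩
            have := hSmem2 _ hc; omega
        have hpar : ¬ Even r := by
          rw [← hrval]
          rcases Nat.not_odd_iff_even.mp hjodd with ⟨k, hk⟩
          rw [Nat.not_even_iff_odd]
          exact ⟨k - 1, by omega⟩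
        have hbf : a + r + 1 ∈ F := by
          have : a + r + 1 = i := by omega
          rw [this, hFeq2, Finset.mem_union]
          right; exact hiS
        have hdisj : Disjoint (Finset.Icc (i-j) (i-2)) S := by
          rw [Finset.disjoint_left]
          intro x hx hxS
          rw [Finset.mem_Icc] at hx
          have := hSmem2 _ hxS; omega
        have e2 : a + r - 1 = i - 2 := by omega
        rw [hS₀, if_neg hpar, if_pos hbf, hTdef, e2, haval, hFeq2,
          Finset.union_sdiff_cancel_left hdisj]
      · have h' : (Lbl.B, F) = (Lbl.B, Finset.Icc (i-j) (i-1) ∪ S.erase i) := by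
          rw [heven, hjval, ← hidef] at h; exact h
        have hFeq2 : F = Finset.Icc (i-j) (i-1) ∪ S.erase i := congrArg Prod.snd h'
        have haval : a = i - j := by
          apply le_antisymm
          · apply Finset.min'_le
            rw [hFeq2, Finset.mem_union, Finset.mem_Icc]
            left; omega
          · apply Finset.le_min'
            intro y hy
            rw [hFeq2, Finset.mem_union, Finset.mem_Icc] at hy
            rcases hy with hy | hy
            · omega
            · have := hermem _ hy; omega
        have hrval : j = r := by
          apply runiq j (by omega)
          · intro x hx
            rw [Finset.mem_Icc] at hx
            rw [hFeq2, Finset.mem_union, Finset.mem_Icc]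
            left; omega
          · rw [hFeq2, Finset.mem_union, Finset.mem_Icc]
            push_neg
            refine ⟨fun _ => by omega, fun hc => ?_⟩
            have := hermem _ hc; omega
        have hpar : Even r := by
          rw [← hrval]; exact Nat.not_odd_iff_even.mp hjodd
        have hdisj : Disjoint (Finset.Icc (i-j) (i-1)) (S.erase i) := by
          rw [Finset.disjoint_left]
          intro x hx hxS
          rw [Finset.mem_Icc] at hx
          have := hermem _ hxS; omega
        have e1 : a + r = i := by omega
        have e2 : a + r - 1 = i - 1 := by omega
        rw [hS₀, if_pos hpar, hTdef, e1, haval, hFeq2,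
          Finset.union_sdiff_cancel_left hdisj, Finset.insert_erase hiS]


/-- For `n` odd: (a) for every `n`-subset `F ⊆ {1,…,n+m}` there is a unique `S ∈ X`
such that `A(F)` is one of the two vertices of `D(S)`; (b) for every `n`-subset
`F ⊆ {1,…,n+m}` with `F ≠ {m,…,m+n-1}` and `F ≠ {m+1,…,m+n}` there is a unique `S ∈ X`
such that `B(F)` is one of the two vertices of `D(S)`. -/
theorem stmt12 (n m : ℕ) (hn : 1 ≤ n) (hm : 1 ≤ m) (hodd : Odd n) :
    (∀ F : Finset ℕ, F ⊆ Finset.Icc 1 (n+m) → F.card = n →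
      ∃! S : Finset ℕ, inX n m S ∧
        ((Lbl.A, F) = (DS n m S).1 ∨ (Lbl.A, F) = (DS n m S).2)) ∧
    (∀ F : Finset ℕ, F ⊆ Finset.Icc 1 (n+m) → F.card = n →
      F ≠ Finset.Icc m (m+n-1) → F ≠ Finset.Icc (m+1) (m+n) →
      ∃! S : Finset ℕ, inX n m S ∧
        ((Lbl.B, F) = (DS n m S).1 ∨ (Lbl.B, F) = (DS n m S).2)) := by
  exact ⟨partA n m hn hm hodd, partB n m hn hm hodd⟩
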